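/- Let M_k denote the number of irreducible complex representations of the iterated wreath product W(r|_k) = Z_{r_1} ≀ ... ≀ Z_{r_k}. Then M_1 = r_1 and M_k = (1/r_k) Σ_{d | c | r_k} μ(c/d) M_{k-1}^{r_k/c} d^2, where the sum is over pairs of divisors d | c with c | r_k and μ is the Möbius function. -/

import Mathlib

/-!
A finite group `H` has `|H| · k(H)` commuting pairs, `k(H)` its number of conjugacy classes. For
`H = G^n ⋊ ℤ/n` sort the commuting pairs `(x, y)` by their images `(s, t) ∈ (ℤ/n)²`. The maps
`(x, y) ↦ (x, y xᵏ)` and `(x, y) ↦ (y, x)` run the Euclidean algorithm on `(s, t)`, so the fibre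
over `(s, t)` is as large as the fibre over `(d, 0)` with `d = gcd(s, t, n)`. There `x = (a, d)` and
`y = (b, 0)` commute iff `a i * b (i + d) = b i * a i`; the indices split into `d` cycles of length
`n / d`, and along a cycle `b` is determined by its first value, which must commute with the
product of `a` around the cycle. So the fibre has `(k(G) |G|^(n/d))^d` elements and
`n · k(H) = ∑_{s,t} k(G)^gcd(s,t,n)`. Expanding `m^g = ∑_{c ∣ g} (μ * m^·)(c)` and counting the
pairs `(s, t)` divisible by `c` turns the sum into the Dirichlet convolution `((μ * m^·) * id²)(n)`,
which is the stated double sum `((μ * id²) * m^·)(n)`.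
-/

open Finset ArithmeticFunction
open scoped ArithmeticFunction.Moebius

theorem card_conjClasses_congr {G H : Type*} [Group G] [Group H] (e : G ≃* H) :
    Nat.card (ConjClasses G) = Nat.card (ConjClasses H) :=
  Nat.card_congr
    { toFun := ConjClasses.map e
      invFun := ConjClasses.map e.symm
      left_inv := fun c => by
        obtain ⟨g, rfl⟩ := ConjClasses.mk_surjective c
        exact congrArg ConjClasses.mk (e.symm_apply_apply g)
      right_inv := fun c => by
        obtain ⟨h, rfl⟩ := ConjClasses.mk_surjective c
        exact congrArg ConjClasses.mk (e.apply_symm_apply h) }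

theorem card_conjClasses_of_card_eq_one {G : Type*} [Group G] (h : Nat.card G = 1) :
    Nat.card (ConjClasses G) = 1 := by
  have : Finite G := Nat.finite_of_card_ne_zero (by simp [h])
  refine le_antisymm ?_ Nat.card_pos
  exact h ▸ Nat.card_le_card_of_surjective _ ConjClasses.mk_surjective

section CommFiber

variable {H A : Type*} [Group H] [Group A] (π : H →* A)

def commFiber (s t : A) : Type _ :=
  {p : H × H // Commute p.1 p.2 ∧ π p.1 = s ∧ π p.2 = t}

def commFiberSwap (s t : A) : commFiber π s t ≃ commFiber π t s :=
  (Equiv.prodComm H H).subtypeEquiv fun p => by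
    simp only [Equiv.prodComm_apply, Prod.fst_swap, Prod.snd_swap, Commute.symm_iff]
    tauto

def commFiberMulPow (s t : A) (k : ℕ) : commFiber π s t ≃ commFiber π s (t * s ^ k) :=
  ((Equiv.refl H).prodShear fun x => Equiv.mulRight (x ^ k)).subtypeEquiv fun p => by
    obtain ⟨x, y⟩ := p
    have hcomm : Commute x (y * x ^ k) ↔ Commute x y :=
      ⟨fun h => by simpa using h.mul_right ((Commute.refl x).pow_right k).inv_right,
        fun h => h.mul_right ((Commute.refl x).pow_right k)⟩
    simp only [Equiv.prodShear_apply, Equiv.coe_refl, id_eq, Equiv.coe_mulRight, map_mul,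
      map_pow, hcomm]
    constructor
    · rintro ⟨h, rfl, rfl⟩; exact ⟨h, rfl, rfl⟩
    · rintro ⟨h, rfl, ht⟩; exact ⟨h, rfl, mul_right_cancel ht⟩

theorem card_commFiber_pow_pow (g : A) (a b : ℕ) :
    Nat.card (commFiber π (g ^ a) (g ^ b)) = Nat.card (commFiber π (g ^ Nat.gcd a b) 1) := by
  induction a, b using Nat.gcd.induction with
  | H0 b => rw [Nat.gcd_zero_left, pow_zero, Nat.card_congr (commFiberSwap π _ _)]
  | H1 a b _ ih =>
    rw [← Nat.mod_add_div b a, pow_add, pow_mul, Nat.card_congr (commFiberMulPow π _ _ _).symm,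
      Nat.card_congr (commFiberSwap π _ _), ih, ← Nat.gcd_rec, Nat.mod_add_div]

theorem card_commute_eq_sum_card_commFiber [Finite H] [Fintype A] :
    Nat.card {p : H × H // Commute p.1 p.2} = ∑ s : A, ∑ t : A, Nat.card (commFiber π s t) := by
  classical
  have := Fintype.ofFinite H
  rw [← Fintype.sum_prod_type', Nat.card_eq_fintype_card, Fintype.card_subtype,
    card_eq_sum_card_fiberwise (f := fun p : H × H => (π p.1, π p.2)) (fun _ _ => mem_univ _)]
  refine sum_congr rfl fun st _ => ?_
  rw [commFiber, Nat.card_eq_fintype_card, Fintype.card_subtype, filter_filter]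
  congr 1
  ext p
  simp [Prod.ext_iff]

end CommFiber

def TwistedCommPairs (G : Type*) [Group G] {ι : Type*} (σ : ι → ι) : Type _ :=
  {p : (ι → G) × (ι → G) // ∀ i, p.1 i * p.2 (σ i) = p.2 i * p.1 i}

namespace TwistedCommPairs

variable {G ι κ : Type*} [Group G]

def congr (e : ι ≃ κ) {σ : ι → ι} {τ : κ → κ} (h : ∀ i, e (σ i) = τ (e i)) :
    TwistedCommPairs G σ ≃ TwistedCommPairs G τ :=
  ((e.arrowCongr (Equiv.refl G)).prodCongr (e.arrowCongr (Equiv.refl G))).subtypeEquiv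
    fun p => by
      rw [← e.forall_congr_right]
      simp [← h]

def prodEquivPi (σ : ι → ι) :
    TwistedCommPairs G (Prod.map σ (id : κ → κ)) ≃ (κ → TwistedCommPairs G σ) where
  toFun p k := ⟨(fun i => p.1.1 (i, k), fun i => p.1.2 (i, k)), fun i => p.2 (i, k)⟩
  invFun F := ⟨(fun x => (F x.2).1.1 x.1, fun x => (F x.2).1.2 x.1), fun x => (F x.2).2 x.1⟩
  left_inv _ := rfl
  right_inv _ := rfl

end TwistedCommPairs

section CommuteApply

variable {G ι : Type*} [Group G] [DecidableEq ι]

def updateMulLeft (i₀ : ι) (u : (ι → G) → G)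
    (hu : ∀ a y, u (Function.update a i₀ y) = u a) : (ι → G) ≃ (ι → G) where
  toFun a := Function.update a i₀ (u a * a i₀)
  invFun a := Function.update a i₀ ((u a)⁻¹ * a i₀)
  left_inv a := by simp [hu]
  right_inv a := by simp [hu]

def commuteApplyEquiv (i₀ : ι) :
    {q : (ι → G) × G // Commute (q.1 i₀) q.2} ≃
      ({j // j ≠ i₀} → G) × {p : G × G // Commute p.1 p.2} where
  toFun q := (fun j => q.1.1 j, ⟨(q.1.1 i₀, q.1.2), q.2⟩)
  invFun r := ⟨((Equiv.funSplitAt i₀ G).symm (r.2.1.1, r.1), r.2.1.2), by simpa using r.2.2⟩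
  left_inv q := Subtype.ext <| Prod.ext (funext fun j => by by_cases h : j = i₀ <;> simp [h]) rfl
  right_inv r := Prod.ext (funext fun j => by simp [j.2]) (Subtype.ext (by simp))

theorem card_commute_mul_apply [Finite G] [Fintype ι] (i₀ : ι) (u : (ι → G) → G)
    (hu : ∀ a y, u (Function.update a i₀ y) = u a) :
    Nat.card {q : (ι → G) × G // Commute (u q.1 * q.1 i₀) q.2} =
      Nat.card G ^ (Fintype.card ι - 1) * Nat.card {p : G × G // Commute p.1 p.2} := by
  have e : {q : (ι → G) × G // Commute (u q.1 * q.1 i₀) q.2} ≃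
      {q : (ι → G) × G // Commute (q.1 i₀) q.2} :=
    ((updateMulLeft i₀ u hu).prodCongr (Equiv.refl G)).subtypeEquiv fun q => by
      simp [updateMulLeft]
  rw [Nat.card_congr (e.trans (commuteApplyEquiv i₀)), Nat.card_prod, Nat.card_fun,
    Nat.card_eq_fintype_card (α := {j // j ≠ i₀}), Fintype.card_subtype_compl,
    Fintype.card_subtype_eq]

end CommuteApply

section Cycle

open Fin.NatCast

variable {G : Type*} [Group G] {L : ℕ} [NeZero L]

def prefixProd (a : Fin L → G) (j : ℕ) : G :=
  ((List.range j).map fun m : ℕ => a m).prod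

theorem prefixProd_succ (a : Fin L → G) (j : ℕ) :
    prefixProd a (j + 1) = prefixProd a j * a j :=
  List.prod_range_succ _ _

theorem prefixProd_update_last {m : ℕ} (a : Fin (m + 1) → G) (y : G) :
    prefixProd (Function.update a (Fin.last m) y) m = prefixProd a m := by
  refine congrArg List.prod (List.map_congr_left fun k hk => Function.update_of_ne ?_ _ _)
  rw [List.mem_range] at hk
  rw [ne_eq, Fin.ext_iff, Fin.val_natCast, Nat.mod_eq_of_lt (by omega), Fin.val_last]
  omega

namespace TwistedCommPairs

theorem snd_natCast (p : TwistedCommPairs G fun i : Fin L => i + 1) (j : ℕ) :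
    p.1.2 j = (prefixProd p.1.1 j)⁻¹ * p.1.2 0 * prefixProd p.1.1 j := by
  induction j with
  | zero => simp [prefixProd]
  | succ j ih =>
    rw [Nat.cast_succ, eq_inv_mul_of_mul_eq (p.2 j), ih, prefixProd_succ]
    group

def cycleEquiv : TwistedCommPairs G (fun i : Fin L => i + 1) ≃
    {q : (Fin L → G) × G // Commute (prefixProd q.1 L) q.2} where
  toFun p := ⟨(p.1.1, p.1.2 0), by
    have h := p.snd_natCast L
    rw [Fin.natCast_self, mul_assoc, eq_inv_mul_iff_mul_eq] at h
    exact h⟩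
  invFun q := ⟨(q.1.1, fun i => (prefixProd q.1.1 i)⁻¹ * q.1.2 * prefixProd q.1.1 i), by
    obtain ⟨⟨a, x⟩, hx⟩ := q
    have hwrap : (prefixProd a L)⁻¹ * x * prefixProd a L = x := by
      rw [mul_assoc, ← hx.eq, inv_mul_cancel_left]
    intro i
    have hsucc : (prefixProd a (i + 1).val)⁻¹ * x * prefixProd a (i + 1).val =
        (prefixProd a (i.val + 1))⁻¹ * x * prefixProd a (i.val + 1) := by
      have hval : (i + 1).val = (i.val + 1) % L := by rw [Fin.val_add, Fin.val_one', Nat.add_mod_mod]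
      rcases (show i.val + 1 ≤ L from i.isLt).lt_or_eq with h | h
      · rw [hval, Nat.mod_eq_of_lt h]
      · rw [hval, h, Nat.mod_self, hwrap]
        simp [prefixProd]
    simp only
    rw [hsucc, prefixProd_succ, Fin.cast_val_eq_self]
    group⟩
  left_inv p := by
    refine Subtype.ext (Prod.ext rfl (funext fun i => ?_))
    simpa using (p.snd_natCast i).symm
  right_inv q := by
    refine Subtype.ext (Prod.ext rfl ?_)
    simp [prefixProd]

end TwistedCommPairs

theorem card_twistedCommPairs_add_one [Finite G] :
    Nat.card (TwistedCommPairs G fun i : Fin L => i + 1) =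
      Nat.card (ConjClasses G) * Nat.card G ^ L := by
  obtain ⟨m, rfl⟩ := Nat.exists_eq_add_one_of_ne_zero (NeZero.ne L)
  rw [Nat.card_congr TwistedCommPairs.cycleEquiv]
  simp_rw [prefixProd_succ, Fin.natCast_eq_last]
  rw [card_commute_mul_apply (Fin.last m) (prefixProd · m) prefixProd_update_last, Fintype.card_fin,
    Nat.add_sub_cancel, card_comm_eq_card_conjClasses_mul_card]
  ring

end Cycle

section Decomposition

open Fin.NatCast

variable {G : Type*} [Group G]

theorem add_mul_mod_mul {j D L : ℕ} (hj : j < D) (y : ℕ) :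
    (j + D * y) % (L * D) = j + D * (y % L) := by
  rcases Nat.eq_zero_or_pos L with rfl | hL
  · simp
  have hy : j + D * y = j + D * (y % L) + L * D * (y / L) := by
    conv_lhs => rw [← Nat.mod_add_div y L]
    ring
  rw [hy, Nat.add_mul_mod_self_left]
  refine Nat.mod_eq_of_lt ?_
  calc j + D * (y % L) < D * (y % L + 1) := by rw [mul_add_one]; omega
    _ ≤ D * L := Nat.mul_le_mul_left D (Nat.mod_lt y hL)
    _ = L * D := mul_comm D L

theorem card_twistedCommPairs_add_natCast [Finite G] {n L D : ℕ} [NeZero n] (h : L * D = n) :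
    Nat.card (TwistedCommPairs G fun i : Fin n => i + (D : Fin n)) =
      (Nat.card (ConjClasses G) * Nat.card G ^ L) ^ D := by
  have : NeZero L := ⟨by rintro rfl; exact NeZero.ne n (by simpa using h.symm)⟩
  let e : Fin L × Fin D ≃ Fin n := finProdFinEquiv.trans (finCongr h)
  have he : ∀ p, e (Prod.map (· + 1) id p) = e p + (D : Fin n) := by
    rintro ⟨x, j⟩
    ext
    simp only [e, Equiv.trans_apply, finProdFinEquiv_apply_val, finCongr_apply, Fin.val_cast,
      Prod.map_fst, Prod.map_snd, id_eq, Fin.val_add, Fin.val_one', Fin.val_natCast,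
      Nat.add_mod_mod, ← h]
    rw [add_assoc, ← mul_add_one, add_mul_mod_mul j.isLt]
  rw [← Nat.card_congr (TwistedCommPairs.congr e he),
    Nat.card_congr (TwistedCommPairs.prodEquivPi _), Nat.card_fun,
    card_twistedCommPairs_add_one, Nat.card_fin]

end Decomposition

theorem sum_zmod_val_eq_sum_range {M : Type*} [AddCommMonoid M] (n : ℕ) [NeZero n] (f : ℕ → M) :
    ∑ s : ZMod n, f s.val = ∑ a ∈ range n, f a :=
  sum_nbij' ZMod.val Nat.cast (fun s _ => mem_range.2 (ZMod.val_lt s)) (fun _ _ => mem_univ _)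
    (fun s _ => ZMod.natCast_zmod_val s) (fun _ ha => ZMod.val_cast_of_lt (mem_range.1 ha))
    (fun _ _ => rfl)

section Semidirect

open Multiplicative Fin.NatCast

variable {G : Type*} [Group G] {n : ℕ} [NeZero n]

def IsCyclicShift (φ : Multiplicative (ZMod n) →* MulAut (Fin n → G)) : Prop :=
  ∀ c f i, φ c f i = f ⟨(i.val + (toAdd c).val) % n, Nat.mod_lt _ (NeZero.pos n)⟩

namespace IsCyclicShift

variable {φ : Multiplicative (ZMod n) →* MulAut (Fin n → G)}

theorem commute_mk_iff (hφ : IsCyclicShift φ) (D : ℕ) (a b : Fin n → G) :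
    Commute (⟨a, ofAdd (D : ZMod n)⟩ : (Fin n → G) ⋊[φ] Multiplicative (ZMod n)) ⟨b, 1⟩ ↔
      ∀ i, a i * b (i + (D : Fin n)) = b i * a i := by
  have hshift : ∀ i : Fin n,
      (⟨(i.val + D) % n, Nat.mod_lt _ (NeZero.pos n)⟩ : Fin n) = i + (D : Fin n) := fun i => by
    ext
    simp [Fin.val_add]
  rw [Commute, SemiconjBy, SemidirectProduct.ext_iff]
  simp [funext_iff, hφ _, hshift]

def commFiberEquiv (hφ : IsCyclicShift φ) (D : ℕ) :
    commFiber (SemidirectProduct.rightHom : (Fin n → G) ⋊[φ] _ →* _) (ofAdd (D : ZMod n)) 1 ≃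
      TwistedCommPairs G fun i : Fin n => i + (D : Fin n) where
  toFun p := ⟨(p.1.1.left, p.1.2.left), by
    obtain ⟨⟨⟨a, s⟩, ⟨b, t⟩⟩, hc, hs, ht⟩ := p
    simp only [SemidirectProduct.rightHom_eq_right] at hs ht
    subst hs ht
    exact (hφ.commute_mk_iff D a b).1 hc⟩
  invFun q := ⟨(⟨q.1.1, ofAdd (D : ZMod n)⟩, ⟨q.1.2, 1⟩),
    (hφ.commute_mk_iff D _ _).2 q.2, rfl, rfl⟩
  left_inv p := by
    obtain ⟨⟨⟨a, s⟩, ⟨b, t⟩⟩, hc, hs, ht⟩ := p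
    simp only [SemidirectProduct.rightHom_eq_right] at hs ht
    subst hs ht
    rfl
  right_inv q := rfl

variable [Finite G]

theorem card_commFiber (hφ : IsCyclicShift φ) (s t : ZMod n) :
    Nat.card (commFiber (SemidirectProduct.rightHom : (Fin n → G) ⋊[φ] _ →* _)
      (ofAdd s) (ofAdd t)) =
      Nat.card G ^ n * Nat.card (ConjClasses G) ^ Nat.gcd (Nat.gcd s.val t.val) n := by
  set π := (SemidirectProduct.rightHom : (Fin n → G) ⋊[φ] _ →* _)
  set D := Nat.gcd (Nat.gcd s.val t.val) n
  set g := ofAdd (1 : ZMod n)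
  have hD : D ∣ n := Nat.gcd_dvd_right _ _
  have hpow (a : ℕ) : ofAdd (a : ZMod n) = g ^ a := by rw [← ofAdd_nsmul, nsmul_one]
  calc Nat.card (commFiber π (ofAdd s) (ofAdd t))
      = Nat.card (commFiber π (g ^ s.val) (g ^ t.val)) := by
        rw [← hpow, ← hpow, ZMod.natCast_zmod_val, ZMod.natCast_zmod_val]
    _ = Nat.card (commFiber π (g ^ Nat.gcd s.val t.val) (g ^ n)) := by
        rw [card_commFiber_pow_pow, ← hpow n, ZMod.natCast_self, ofAdd_zero]
    _ = Nat.card (commFiber π (ofAdd (D : ZMod n)) 1) := by rw [card_commFiber_pow_pow, hpow]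
    _ = Nat.card (TwistedCommPairs G fun i : Fin n => i + (D : Fin n)) :=
        Nat.card_congr (hφ.commFiberEquiv D)
    _ = (Nat.card (ConjClasses G) * Nat.card G ^ (n / D)) ^ D :=
        card_twistedCommPairs_add_natCast (Nat.div_mul_cancel hD)
    _ = Nat.card G ^ n * Nat.card (ConjClasses G) ^ D := by
        rw [mul_pow, ← pow_mul, Nat.div_mul_cancel hD, mul_comm]

theorem card_conjClasses (hφ : IsCyclicShift φ) :
    n * Nat.card (ConjClasses ((Fin n → G) ⋊[φ] Multiplicative (ZMod n))) =
      ∑ a ∈ range n, ∑ b ∈ range n, Nat.card (ConjClasses G) ^ Nat.gcd (Nat.gcd a b) n := by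
  set H := (Fin n → G) ⋊[φ] Multiplicative (ZMod n)
  have : Finite H := Finite.of_equiv _ SemidirectProduct.equivProd.symm
  have hG : 0 < Nat.card G ^ n := pow_pos Nat.card_pos n
  refine Nat.eq_of_mul_eq_mul_left hG ?_
  calc Nat.card G ^ n * (n * Nat.card (ConjClasses H))
      = Nat.card (ConjClasses H) * Nat.card H := by
        rw [SemidirectProduct.card, Nat.card_fun, Nat.card_fin,
          Nat.card_congr Multiplicative.toAdd, Nat.card_zmod]
        ring
    _ = Nat.card {p : H × H // Commute p.1 p.2} := (card_comm_eq_card_conjClasses_mul_card H).symm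
    _ = ∑ s : ZMod n, ∑ t : ZMod n,
          Nat.card G ^ n * Nat.card (ConjClasses G) ^ Nat.gcd (Nat.gcd s.val t.val) n := by
        rw [card_commute_eq_sum_card_commFiber SemidirectProduct.rightHom, ← ofAdd.sum_comp]
        refine sum_congr rfl fun s _ => ?_
        rw [← ofAdd.sum_comp]
        exact sum_congr rfl fun t _ => hφ.card_commFiber s t
    _ = _ := by
        simp_rw [← mul_sum]
        rw [← sum_zmod_val_eq_sum_range n]
        simp_rw [← sum_zmod_val_eq_sum_range n]

end IsCyclicShift

end Semidirect

theorem card_filter_dvd_range {c n : ℕ} (hc : c ∣ n) (hc0 : c ≠ 0) :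
    #{a ∈ range n | c ∣ a} = n / c := by
  obtain ⟨q, rfl⟩ := hc
  have hmap : {a ∈ range (c * q) | c ∣ a} = (range q).map ⟨(c * ·), mul_right_injective₀ hc0⟩ := by
    ext a
    simp only [mem_filter, mem_range, mem_map, Function.Embedding.coeFn_mk]
    constructor
    · rintro ⟨ha, b, rfl⟩
      exact ⟨b, lt_of_mul_lt_mul_left ha (Nat.zero_le c), rfl⟩
    · rintro ⟨b, hb, rfl⟩
      exact ⟨Nat.mul_lt_mul_of_pos_left hb (Nat.pos_of_ne_zero hc0), dvd_mul_right c b⟩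
  rw [hmap, card_map, card_range, Nat.mul_div_cancel_left q (Nat.pos_of_ne_zero hc0)]

def geometric (m : ℤ) : ArithmeticFunction ℤ :=
  ⟨fun k => if k = 0 then 0 else m ^ k, rfl⟩

theorem geometric_apply {m : ℤ} {k : ℕ} (hk : k ≠ 0) : geometric m k = m ^ k := if_neg hk

theorem sum_divisors_moebius_mul_geometric (m : ℤ) {g : ℕ} (hg : g ≠ 0) :
    ∑ c ∈ g.divisors, (μ * geometric m) c = m ^ g := by
  rw [← coe_mul_zeta_apply, mul_right_comm, moebius_mul_coe_zeta, one_mul, geometric_apply hg]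

theorem sum_range_sum_range_pow_gcd (m : ℤ) {n : ℕ} (hn : n ≠ 0) :
    ∑ a ∈ range n, ∑ b ∈ range n, m ^ Nat.gcd (Nat.gcd a b) n =
      ((μ * geometric m) * (pow 2 : ArithmeticFunction ℕ)) n := by
  let δ (c a : ℕ) : ℤ := if c ∣ a then 1 else 0
  have hsplit : ∀ a b, m ^ Nat.gcd (Nat.gcd a b) n =
      ∑ c ∈ n.divisors, (μ * geometric m) c * (δ c a * δ c b) := by
    intro a b
    have hg : Nat.gcd (Nat.gcd a b) n ≠ 0 :=
      (Nat.gcd_pos_of_pos_right _ (Nat.pos_of_ne_zero hn)).ne'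
    rw [← sum_divisors_moebius_mul_geometric m hg,
      ← Nat.divisors_filter_dvd_of_dvd hn (Nat.gcd_dvd_right _ _), sum_filter]
    refine sum_congr rfl fun c hc => ?_
    simp only [Nat.dvd_gcd_iff, and_iff_left (Nat.dvd_of_mem_divisors hc), δ, ite_and]
    split_ifs <;> simp
  have hcount : ∀ c ∈ n.divisors, ∑ a ∈ range n, δ c a = ((n / c : ℕ) : ℤ) := fun c hc => by
    rw [sum_boole, card_filter_dvd_range (Nat.dvd_of_mem_divisors hc)
      (Nat.pos_of_mem_divisors hc).ne']
  simp_rw [hsplit]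
  rw [sum_comm]
  simp_rw [sum_comm (s := range n) (t := n.divisors), ← mul_sum]
  rw [mul_apply, Nat.sum_divisorsAntidiagonal fun c d =>
    (μ * geometric m) c * ((pow 2 : ArithmeticFunction ℕ) : ArithmeticFunction ℤ) d]
  refine sum_congr rfl fun c hc => ?_
  rw [sum_comm, ← sum_mul_sum, hcount c hc, ← sq]
  simp [pow_apply]

theorem sum_range_sum_range_pow_gcd_eq_sum_divisors (m : ℤ) {n : ℕ} (hn : n ≠ 0) :
    ∑ a ∈ range n, ∑ b ∈ range n, m ^ Nat.gcd (Nat.gcd a b) n =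
      ∑ c ∈ n.divisors, ∑ d ∈ c.divisors, μ (c / d) * m ^ (n / c) * (d : ℤ) ^ 2 := by
  rw [sum_range_sum_range_pow_gcd m hn, mul_right_comm, mul_apply,
    Nat.sum_divisorsAntidiagonal fun c e => (μ * (pow 2 : ArithmeticFunction ℕ)) c * geometric m e]
  refine sum_congr rfl fun c hc => ?_
  have hcn := Nat.dvd_of_mem_divisors hc
  have hnc : n / c ≠ 0 :=
    (Nat.div_ne_zero_iff_of_dvd hcn).2 ⟨hn, ne_zero_of_dvd_ne_zero hn hcn⟩
  rw [geometric_apply hnc, mul_apply, Nat.sum_divisorsAntidiagonal' fun a d =>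
      μ a * ((pow 2 : ArithmeticFunction ℕ) : ArithmeticFunction ℤ) d, sum_mul]
  refine sum_congr rfl fun d _ => ?_
  simp only [natCoe_apply, pow_apply, OfNat.ofNat_ne_zero, false_and, if_false, Nat.cast_pow]
  ring

/-- Let `M_k` be the number of irreducible complex representations
(equivalently, conjugacy classes) of the iterated wreath product
`W(r|_k) = Z_{r_1} ≀ ... ≀ Z_{r_k}` (defined recursively: `W(r|_0)` trivial and
`W(r|_k) = W(r|_{k-1}) ≀ Z_{r_k}`).  Then `M_1 = r_1` and
`r_k · M_k = Σ_{d ∣ c ∣ r_k} μ(c/d) · M_{k-1}^{r_k/c} · d²`, where `μ` is the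
Möbius function. -/
theorem card_irreps_iterated_wreath_recursion (r : ℕ → ℕ) (hr : ∀ i, 0 < r i)
    (W : ℕ → Type) [∀ k, Group (W k)] [∀ k, Finite (W k)]
    (hW0 : Nat.card (W 0) = 1)
    (φ : ∀ k, Multiplicative (ZMod (r (k + 1))) →* MulAut (Fin (r (k + 1)) → W k))
    (hφ : ∀ k (c : Multiplicative (ZMod (r (k + 1)))) (f : Fin (r (k + 1)) → W k)
      (i : Fin (r (k + 1))),
      φ k c f i = f ⟨(i.val + (Multiplicative.toAdd c).val) % r (k + 1),
        Nat.mod_lt _ (hr (k + 1))⟩)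
    (hW : ∀ k, Nonempty
      (W (k + 1) ≃* SemidirectProduct (Fin (r (k + 1)) → W k)
        (Multiplicative (ZMod (r (k + 1)))) (φ k)))
    (M : ℕ → ℤ) (hM : ∀ k, M k = Nat.card (ConjClasses (W k))) :
    M 1 = r 1 ∧
    ∀ k, 1 ≤ k →
      (r (k + 1) : ℤ) * M (k + 1) =
        ∑ c ∈ (r (k + 1)).divisors, ∑ d ∈ c.divisors,
          μ (c / d) * M k ^ (r (k + 1) / c) * (d : ℤ) ^ 2 := by
  have hstep : ∀ k, (r (k + 1) : ℤ) * M (k + 1) =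
      ∑ a ∈ range (r (k + 1)), ∑ b ∈ range (r (k + 1)),
        M k ^ Nat.gcd (Nat.gcd a b) (r (k + 1)) := by
    intro k
    have : NeZero (r (k + 1)) := ⟨(hr (k + 1)).ne'⟩
    obtain ⟨e⟩ := hW k
    rw [hM, hM, card_conjClasses_congr e]
    exact_mod_cast IsCyclicShift.card_conjClasses (hφ k)
  refine ⟨?_, fun k _ => (hstep k).trans
    (sum_range_sum_range_pow_gcd_eq_sum_divisors (M k) (hr (k + 1)).ne')⟩
  have h1 := hstep 0
  simp only [hM 0, card_conjClasses_of_card_eq_one hW0, Nat.cast_one, one_pow, sum_const,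
    card_range, nsmul_eq_mul, mul_one] at h1
  exact mul_left_cancel₀ (by exact_mod_cast (hr 1).ne') h1
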